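/- Let T = G_m act on an affine scheme X = Spec A, where A is non-negatively graded with the weight grading. Then the pull-back along the quotient X → X//T = Spec A₀ induces an isomorphism Ω_{A₀/k} ≅ (Ω_{A/k})₀ ∩ Ker(e) and moreover the inclusion (Ω_{A/k})^T ∩ Ker(e) ⊆ (Ω_{A/k})^T is an equality: every T-invariant (weight-0) Kähler differential form on a quasi-conical affine T-scheme is horizontal, i.e. killed by the Euler derivation e. -/
import Mathlib


open KaehlerDifferential

set_option synthInstance.maxHeartbeats 1000000
set_option maxHeartbeats 1000000

/-- The `k`-submodule of weight-`w` Kähler `1`-forms on a graded algebra `A`: it is spanned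
by the forms `a • db` with `a, b` homogeneous and `|a| + |b| = w`.  The weight-`0` part
consists exactly of the `T = 𝔾ₘ`-invariant forms. -/
noncomputable def oneFormWeight (k A : Type) [Field k] [CommRing A] [Algebra k A]
    (𝒜 : ℕ → Submodule k A) (w : ℕ) : Submodule k (Ω[A⁄k]) :=
  Submodule.span k { x | ∃ (a b : A) (wa wb : ℕ),
    a ∈ 𝒜 wa ∧ b ∈ 𝒜 wb ∧ w = wa + wb ∧ x = a • D k A b }

section Abstract
variable (k B A : Type) [Field k] [CommRing A] [CommRing B]
  [Algebra k A] [Algebra k B] [Algebra B A] [IsScalarTower k B A]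

/-- Abstract lemma: if the inclusion `B → A` admits a retraction `π`, the induced map on
Kähler differentials is injective. -/
theorem kaehler_map_injective_of_retraction (π : A →+* B)
    (hπ : ∀ b : B, π (algebraMap B A b) = b)
    (hπk : ∀ c : k, π (algebraMap k A c) = algebraMap k B c) :
    Function.Injective (KaehlerDifferential.map k k B A) := by
  letI : Algebra A B := π.toAlgebra
  haveI : IsScalarTower k A B := IsScalarTower.of_algebraMap_eq (fun c => (hπk c).symm)
  haveI : SMulCommClass k A B := ⟨fun c a m => (mul_smul_comm c (π a) m).symm⟩
  set ι := KaehlerDifferential.map k k B A with hι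
  set r := KaehlerDifferential.map k k A B with hr
  have hretr : ∀ ω : Ω[B⁄k], r (ι ω) = ω := by
    intro ω
    have hω : ω ∈ Submodule.span B (Set.range (D k B)) := by
      rw [KaehlerDifferential.span_range_derivation]; trivial
    induction hω using Submodule.span_induction with
    | mem y hy =>
      obtain ⟨b, rfl⟩ := hy
      rw [hι, hr, KaehlerDifferential.map_D, KaehlerDifferential.map_D]
      congr 1
      exact hπ b
    | zero => rw [map_zero, map_zero]
    | add y z _ _ hy hz => rw [map_add, map_add, hy, hz]
    | smul b y _ hy =>
      have h1 : ι (b • y) = algebraMap B A b • ι y := by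
        rw [ι.map_smul, algebraMap_smul]
      have h2 : r (algebraMap B A b • ι y) = algebraMap B A b • r (ι y) :=
        r.map_smul _ _
      have h3 : (algebraMap B A b : A) • (y : Ω[B⁄k]) = b • y := by
        rw [← algebraMap_smul B (algebraMap B A b) y]
        show π (algebraMap B A b) • y = b • y
        rw [hπ]
      rw [h1, h2, hy, h3]
  exact Function.LeftInverse.injective hretr

/-- Abstract lemma: the range of the induced map on Kähler differentials is spanned by
`(algebraMap B A a) • D (algebraMap B A b)`. -/
theorem kaehler_map_range :
    Set.range (KaehlerDifferential.map k k B A) =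
      ↑(Submodule.span k { x : Ω[A⁄k] | ∃ a b : B,
          x = algebraMap B A a • D k A (algebraMap B A b) }) := by
  set ι := KaehlerDifferential.map k k B A with hι
  have hclosed : ∀ (b : B) (x : Ω[A⁄k]),
      x ∈ Submodule.span k { x : Ω[A⁄k] | ∃ a b : B,
          x = algebraMap B A a • D k A (algebraMap B A b) } →
      algebraMap B A b • x ∈ Submodule.span k { x : Ω[A⁄k] | ∃ a b : B,
          x = algebraMap B A a • D k A (algebraMap B A b) } := by
    intro b x hx
    induction hx using Submodule.span_induction with
    | mem y hy =>
      obtain ⟨a', b', rfl⟩ := hy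
      rw [smul_smul, ← map_mul]
      exact Submodule.subset_span ⟨b * a', b', rfl⟩
    | zero => rw [smul_zero]; exact zero_mem _
    | add y z _ _ hy hz => rw [smul_add]; exact add_mem hy hz
    | smul c y _ hy => rw [smul_comm]; exact Submodule.smul_mem _ c hy
  apply le_antisymm
  · rintro _ ⟨ω, rfl⟩
    have hω : ω ∈ Submodule.span B (Set.range (D k B)) := by
      rw [KaehlerDifferential.span_range_derivation]; trivial
    induction hω using Submodule.span_induction with
    | mem y hy =>
      obtain ⟨b, rfl⟩ := hy
      rw [hι, KaehlerDifferential.map_D]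
      exact Submodule.subset_span ⟨1, b, by rw [map_one, one_smul]⟩
    | zero => rw [map_zero]; exact zero_mem _
    | add y z _ _ hy hz => rw [map_add]; exact add_mem hy hz
    | smul b y _ hy =>
      have h1 : ι (b • y) = algebraMap B A b • ι y := by
        rw [ι.map_smul, algebraMap_smul]
      rw [h1]
      exact hclosed b _ hy
  · intro x hx
    induction hx using Submodule.span_induction with
    | mem y hy =>
      obtain ⟨a, b, rfl⟩ := hy
      refine ⟨a • D k B b, ?_⟩
      rw [hι, ι.map_smul, KaehlerDifferential.map_D, algebraMap_smul]
    | zero => exact ⟨0, map_zero _⟩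
    | add y z _ _ hy hz =>
      obtain ⟨u, hu⟩ := hy; obtain ⟨v, hv⟩ := hz
      exact ⟨u + v, by rw [map_add, hu, hv]⟩
    | smul c y _ hy =>
      obtain ⟨u, hu⟩ := hy
      exact ⟨c • u, by rw [LinearMap.map_smul_of_tower, hu]⟩

end Abstract

section Aux
variable (k A : Type) [Field k] [CommRing A] [Algebra k A]
    (𝒜 : ℕ → Submodule k A) [GradedAlgebra 𝒜]

/-- The projection onto the degree-zero part, as a ring homomorphism into the grade-zero
subalgebra.  It is a retraction of the inclusion. -/
noncomputable def proj0 : A →+* (SetLike.GradeZero.subalgebra 𝒜) :=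
  RingHom.codRestrict (GradedRing.projZeroRingHom 𝒜) (SetLike.GradeZero.subalgebra 𝒜)
    (fun _ => SetLike.coe_mem _)

theorem proj0_coe (b : SetLike.GradeZero.subalgebra 𝒜) : proj0 k A 𝒜 (b : A) = b := by
  ext; exact DirectSum.decompose_of_mem_same 𝒜 (b.2 : (b : A) ∈ 𝒜 0)

theorem proj0_algebraMap (c : k) :
    proj0 k A 𝒜 (algebraMap k A c) = algebraMap k (SetLike.GradeZero.subalgebra 𝒜) c := by
  ext; exact DirectSum.decompose_of_mem_same 𝒜 (SetLike.algebraMap_mem_graded 𝒜 c)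

end Aux

/-- Let `T = 𝔾ₘ` act on the affine scheme `X = Spec A`, with `A`
non-negatively graded (`X` quasi-conical), so that `X ⫽ T = Spec A₀`.  Then the pull-back
along the quotient map identifies `Ω_{A₀/k}` with the weight-0 part of `Ω_{A/k}`
(injectively, with image exactly the weight-0 forms), and every `T`-invariant (weight-0)
form is horizontal, i.e. killed by the Euler derivation `e`. -/
theorem invariant_forms_on_quasiconical_scheme
    (k A : Type) [Field k] [CharZero k] [CommRing A] [Algebra k A]
    [Algebra.FiniteType k A]
    (𝒜 : ℕ → Submodule k A) [GradedAlgebra 𝒜]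
    (e : Ω[A⁄k] →ₗ[A] A)
    (he : ∀ (w : ℕ) (f : A), f ∈ 𝒜 w → e (D k A f) = w • f) :
    Function.Injective
        (KaehlerDifferential.map k k (SetLike.GradeZero.subalgebra 𝒜) A) ∧
    Set.range (KaehlerDifferential.map k k (SetLike.GradeZero.subalgebra 𝒜) A) =
        (oneFormWeight k A 𝒜 0 : Set (Ω[A⁄k])) ∧
    (∀ x ∈ oneFormWeight k A 𝒜 0, e x = 0) := by
  set A₀ := SetLike.GradeZero.subalgebra 𝒜 with hA₀
  refine ⟨?_, ?_, ?_⟩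
  · exact kaehler_map_injective_of_retraction k A₀ A (proj0 k A 𝒜)
      (fun b => proj0_coe k A 𝒜 b) (proj0_algebraMap k A 𝒜)
  · have hspan : Submodule.span k { x : Ω[A⁄k] | ∃ a b : A₀,
        x = algebraMap A₀ A a • D k A (algebraMap A₀ A b) } = oneFormWeight k A 𝒜 0 := by
      apply le_antisymm
      · rw [Submodule.span_le]
        rintro _ ⟨a, b, rfl⟩
        exact Submodule.subset_span ⟨(a : A), (b : A), 0, 0, a.2, b.2, rfl, rfl⟩
      · refine Submodule.span_le.mpr ?_
        rintro _ ⟨a, b, wa, wb, ha, hb, hw, rfl⟩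
        have hwa : wa = 0 := by omega
        have hwb : wb = 0 := by omega
        subst hwa; subst hwb
        exact Submodule.subset_span ⟨⟨a, ha⟩, ⟨b, hb⟩, rfl⟩
    rw [kaehler_map_range k A₀ A, hspan]
  · intro x hx
    induction hx using Submodule.span_induction with
    | mem y hy =>
      obtain ⟨a, b, wa, wb, ha, hb, hw, rfl⟩ := hy
      have hwa : wa = 0 := by omega
      have hwb : wb = 0 := by omega
      subst hwa; subst hwb
      rw [map_smul, he 0 b hb, zero_smul, smul_zero]
    | zero => rw [map_zero]
    | add y z _ _ hy hz => rw [map_add, hy, hz, add_zero]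
    | smul c y _ hy => rw [LinearMap.map_smul_of_tower, hy, smul_zero]
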